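/- (Validity of the Pythagorean definition of the obtuse angle via the principle of the Infinite.) Let θ be a real number with 0 < θ < π. Then π / 2 < θ if and only if there exists a natural number n with n odd such that ω n < θ, where ω n := Real.arccos (1 - (q n)^2 / (2 * (p n)^2)). -/

import Mathlib

/-!
For odd `n` the side and diameter numbers satisfy `q n ^ 2 = 2 * p n ^ 2 + 1`, so the law of cosines
gives `cos (ω n) = -1 / (2 * p n ^ 2)`: every `ω n` with `n` odd is obtuse, and since `p n → ∞` these
angles tend to a right angle.
-/

mutual
/-- The Pythagorean side numbers. -/
def p : ℕ → ℕ
  | 0 => 1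
  | n + 1 => p n + q n
/-- The Pythagorean diameter numbers. -/
def q : ℕ → ℕ
  | 0 => 1
  | n + 1 => 2 * p n + q n
end

open Filter Topology Real

lemma one_le_q (n : ℕ) : 1 ≤ q n := by
  induction n with
  | zero => simp [q]
  | succ n ih => simp only [q]; omega

lemma lt_p (n : ℕ) : n < p n := by
  induction n with
  | zero => simp [p]
  | succ n ih => have := one_le_q n; simp only [p]; omega

lemma p_pos (n : ℕ) : 0 < p n :=
  (Nat.zero_le n).trans_lt (lt_p n)

lemma q_sq_sub_two_mul_p_sq (n : ℕ) : (q n : ℤ) ^ 2 - 2 * (p n : ℤ) ^ 2 = (-1) ^ (n + 1) := by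
  induction n with
  | zero => simp [p, q]
  | succ n ih =>
    rw [pow_succ _ (n + 1), ← ih]
    simp only [p, q]
    push_cast
    ring

lemma q_sq_of_odd {n : ℕ} (hn : Odd n) : (q n : ℝ) ^ 2 = 2 * (p n : ℝ) ^ 2 + 1 := by
  have h := q_sq_sub_two_mul_p_sq n
  rw [hn.add_one.neg_one_pow] at h
  have h' : (q n : ℤ) ^ 2 = 2 * (p n : ℤ) ^ 2 + 1 := by linarith
  exact_mod_cast h'

/-- The apex angle `ω n` of the isosceles triangle with legs `p n` and base `q n`. -/
noncomputable def apexAngle (n : ℕ) : ℝ :=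
  arccos (1 - (q n : ℝ) ^ 2 / (2 * (p n : ℝ) ^ 2))

lemma apexAngle_of_odd {n : ℕ} (hn : Odd n) : apexAngle n = arccos (-(2 * (p n : ℝ) ^ 2)⁻¹) := by
  have hp : (p n : ℝ) ≠ 0 := by exact_mod_cast (p_pos n).ne'
  rw [apexAngle, q_sq_of_odd hn]
  congr 1
  field_simp
  ring

lemma Real.pi_div_two_lt_arccos {x : ℝ} : π / 2 < arccos x ↔ x < 0 := by
  simpa only [not_le] using arccos_le_pi_div_two.not

lemma pi_div_two_lt_apexAngle {n : ℕ} (hn : Odd n) : π / 2 < apexAngle n := by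
  rw [apexAngle_of_odd hn, Real.pi_div_two_lt_arccos, neg_lt_zero]
  have := p_pos n
  positivity

lemma Real.tendsto_arccos_neg_inv_atTop :
    Tendsto (fun x : ℝ => arccos (-x⁻¹)) atTop (𝓝 (π / 2)) := by
  rw [← arccos_zero]
  refine (continuous_arccos.tendsto 0).comp ?_
  simpa using (tendsto_inv_atTop_zero (𝕜 := ℝ)).neg

lemma tendsto_p_atTop : Tendsto (fun n => (p n : ℝ)) atTop atTop :=
  tendsto_natCast_atTop_atTop.comp <| tendsto_atTop_mono (fun n => (lt_p n).le) tendsto_id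

lemma tendsto_apexAngle_odd : Tendsto (fun k => apexAngle (2 * k + 1)) atTop (𝓝 (π / 2)) := by
  simp only [apexAngle_of_odd (odd_two_mul_add_one _)]
  have hk : Tendsto (fun k : ℕ => 2 * k + 1) atTop atTop :=
    tendsto_atTop_mono (fun k => show k ≤ 2 * k + 1 by omega) tendsto_id
  refine Real.tendsto_arccos_neg_inv_atTop.comp ?_
  exact ((tendsto_pow_atTop two_ne_zero).comp (tendsto_p_atTop.comp hk)).const_mul_atTop two_pos

/-- The Pythagorean definition of the obtuse angle: an angle is obtuse iff it is greater than
some ω n with n odd. -/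
theorem obtuse_iff_gt_omega_odd (θ : ℝ) (h0 : 0 < θ) (hπ : θ < Real.pi) :
    Real.pi / 2 < θ ↔
      ∃ n : ℕ, Odd n ∧ Real.arccos (1 - ((q n : ℝ)) ^ 2 / (2 * ((p n : ℝ)) ^ 2)) < θ := by
  change π / 2 < θ ↔ ∃ n, Odd n ∧ apexAngle n < θ
  constructor
  · intro hθ
    obtain ⟨k, hk⟩ := (tendsto_apexAngle_odd.eventually_lt_const hθ).exists
    exact ⟨2 * k + 1, odd_two_mul_add_one k, hk⟩
  · rintro ⟨n, hn, hlt⟩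
    exact (pi_div_two_lt_apexAngle hn).trans hlt
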